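/- Fix a depth L ≥ 2, widths M₀, …, M_L ∈ ℕ, and ranks r₁^ℓ, r₂^ℓ, r̂^ℓ ∈ ℕ. For ℓ = 1, …, L let U^ℓ ∈ ℝ^{M_ℓ × r₁^ℓ}, V^ℓ ∈ ℝ^{M_{ℓ−1} × r₁^ℓ}, B^ℓ ∈ ℝ^{M_ℓ × r₂^ℓ}, and coefficients s₁^ℓ ∈ ℝ^{r₁^ℓ}, s₂^ℓ ∈ ℝ^{r₂^ℓ}, and a vector b^L ∈ ℝ^{M_L}. Given an input x ∈ ℝ^{M₀}, define the LRNR hidden states by z⁰ := x, z^ℓ := σ( U^ℓ diag(s₁^ℓ) (V^ℓ)^⊤ z^{ℓ−1} + B^ℓ s₂^ℓ ) for ℓ = 1, …, L−1, and output z^L := U^L diag(s₁^L) (V^L)^⊤ z^{L−1} + b^L, where σ is the entrywise ReLU σ(β) = max(β,0). For each ℓ = 1, …, L−1 let Ξ^ℓ ∈ ℝ^{M_ℓ × r̂^ℓ} and let (P^ℓ)^⊤ : ℝ^{M_ℓ} → ℝ^{r̂^ℓ} be a coordinate-selection map such that (P^ℓ)^⊤ Ξ^ℓ is invertible. Define the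 FastLRNR states: ẑ¹ := σ( (P¹)^⊤ U¹ diag(s₁¹) (V¹)^⊤ x + (P¹)^⊤ B¹ s₂¹ ), and for ℓ = 2, …, L−1, ẑ^ℓ := σ( (P^ℓ)^⊤ U^ℓ diag(s₁^ℓ) (V̂^ℓ)^⊤ ẑ^{ℓ−1} + (P^ℓ)^⊤ B^ℓ s₂^ℓ ) where (V̂^ℓ)^⊤ := (V^ℓ)^⊤ Ξ^{ℓ−1} ((P^{ℓ−1})^⊤ Ξ^{ℓ−1})^{−1}, and the FastLRNR output ŷ := U^L diag(s₁^L) (V̂^L)^⊤ ẑ^{L−1} + b^L with (V̂^L)^⊤ := (V^L)^⊤ Ξ^{L−1} ((P^{L−1})^⊤ Ξ^{L−1})^{−1}. If for this input and these coefficients every hidden state lies in the corresponding column space, z^ℓ ∈ colspan(Ξ^ℓ) for ℓ = 1, …, L−1, then ẑ^ℓ = (P^ℓ)^⊤ z^ℓ for all ℓ = 1, …, L−1 and ŷ = z^L. -/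

import Mathlib

/-!
Selecting coordinates commutes with the entrywise ReLU and with the affine part of a layer,
so `(P^ℓ)ᵀ z^ℓ` satisfies the FastLRNR recursion as soon as the compressed weights see the
same input as the full ones. They do: if `z = Ξ q` then `(Pᵀ Ξ)⁻¹ Pᵀ z = q`, so
`Ξ (Pᵀ Ξ)⁻¹ Pᵀ z = z` and hence `(V̂^ℓ)ᵀ (P^{ℓ-1})ᵀ z^{ℓ-1} = (V^ℓ)ᵀ z^{ℓ-1}`.
Induction on `ℓ` gives the hidden states, and the last step the output.
-/

open Matrix

/-- The entrywise ReLU. -/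
noncomputable def vrelu {k : ℕ} (v : Fin k → ℝ) : Fin k → ℝ := fun j => max (v j) 0

theorem Matrix.submatrix_id_mulVec {R m n k : Type*} [NonUnitalNonAssocSemiring R] [Fintype n]
    (A : Matrix m n R) (ι : k → m) (w : n → R) : (A.submatrix ι id) *ᵥ w = fun j => (A *ᵥ w) (ι j) :=
  rfl

theorem vrelu_affine_comp {k n r₁ r₂ : ℕ} (U : Matrix (Fin n) (Fin r₁) ℝ)
    (B : Matrix (Fin n) (Fin r₂) ℝ) (w : Fin r₁ → ℝ) (s : Fin r₂ → ℝ) (ι : Fin k → Fin n) :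
    (fun j => vrelu (U *ᵥ w + B *ᵥ s) (ι j)) =
      vrelu ((U.submatrix ι id) *ᵥ w + (B.submatrix ι id) *ᵥ s) :=
  rfl

theorem Matrix.mul_mul_inv_submatrix_mulVec {R m n r : Type*} [CommRing R] [Fintype m]
    [Fintype r] [DecidableEq r] (W : Matrix n m R) (Ξ : Matrix m r R) (ι : r → m)
    (hΞ : IsUnit (Ξ.submatrix ι id).det) (q : r → R) :
    (W * Ξ * (Ξ.submatrix ι id)⁻¹) *ᵥ (fun j => (Ξ *ᵥ q) (ι j)) = W *ᵥ (Ξ *ᵥ q) := by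
  rw [← submatrix_id_mulVec, mulVec_mulVec, Matrix.mul_assoc (W * Ξ), nonsing_inv_mul _ hΞ,
    Matrix.mul_one, mulVec_mulVec]

theorem fastlrnr_exact_general
    (L : ℕ) (hL : 2 ≤ L)
    (Mw r₁ r₂ rh : ℕ → ℕ)
    (U : (ℓ : ℕ) → Matrix (Fin (Mw ℓ)) (Fin (r₁ ℓ)) ℝ)
    (V : (ℓ : ℕ) → Matrix (Fin (Mw (ℓ - 1))) (Fin (r₁ ℓ)) ℝ)
    (B : (ℓ : ℕ) → Matrix (Fin (Mw ℓ)) (Fin (r₂ ℓ)) ℝ)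
    (s₁ : (ℓ : ℕ) → Fin (r₁ ℓ) → ℝ) (s₂ : (ℓ : ℕ) → Fin (r₂ ℓ) → ℝ)
    (bL : Fin (Mw L) → ℝ)
    (x : Fin (Mw 0) → ℝ)
    -- the LRNR hidden states and output
    (z : (ℓ : ℕ) → Fin (Mw ℓ) → ℝ)
    (hz0 : z 0 = x)
    (hz : ∀ ℓ, 1 ≤ ℓ → ℓ ≤ L - 1 →
      z ℓ = vrelu ((U ℓ).mulVec (fun k => s₁ ℓ k * ((V ℓ)ᵀ.mulVec (z (ℓ - 1))) k) +
        (B ℓ).mulVec (s₂ ℓ)))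
    (hzL : z L = (U L).mulVec (fun k => s₁ L k * ((V L)ᵀ.mulVec (z (L - 1))) k) + bL)
    -- the empirical interpolation data
    (Ξ : (ℓ : ℕ) → Matrix (Fin (Mw ℓ)) (Fin (rh ℓ)) ℝ)
    (ι : (ℓ : ℕ) → Fin (rh ℓ) → Fin (Mw ℓ))
    (hinv : ∀ ℓ, 1 ≤ ℓ → ℓ ≤ L - 1 → IsUnit ((Ξ ℓ).submatrix (ι ℓ) id).det)
    -- the FastLRNR states and output
    (zh : (ℓ : ℕ) → Fin (rh ℓ) → ℝ)
    (hzh1 : zh 1 = vrelu (((U 1).submatrix (ι 1) id).mulVec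
        (fun k => s₁ 1 k * ((V 1)ᵀ.mulVec x) k) +
      ((B 1).submatrix (ι 1) id).mulVec (s₂ 1)))
    (hzh : ∀ ℓ, 2 ≤ ℓ → ℓ ≤ L - 1 →
      zh ℓ = vrelu (((U ℓ).submatrix (ι ℓ) id).mulVec
          (fun k => s₁ ℓ k *
            (((V ℓ)ᵀ * Ξ (ℓ - 1) * ((Ξ (ℓ - 1)).submatrix (ι (ℓ - 1)) id)⁻¹).mulVec
              (zh (ℓ - 1))) k) +
        ((B ℓ).submatrix (ι ℓ) id).mulVec (s₂ ℓ)))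
    (yh : Fin (Mw L) → ℝ)
    (hyh : yh = (U L).mulVec
        (fun k => s₁ L k *
          (((V L)ᵀ * Ξ (L - 1) * ((Ξ (L - 1)).submatrix (ι (L - 1)) id)⁻¹).mulVec
            (zh (L - 1))) k) + bL)
    -- the hidden states lie in the sampled subspaces
    (hsub : ∀ ℓ, 1 ≤ ℓ → ℓ ≤ L - 1 → ∃ q : Fin (rh ℓ) → ℝ, z ℓ = (Ξ ℓ).mulVec q) :
    (∀ ℓ, 1 ≤ ℓ → ℓ ≤ L - 1 → zh ℓ = fun j => z ℓ (ι ℓ j)) ∧ yh = z L := by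
  have hidden : ∀ ℓ, 1 ≤ ℓ → ℓ ≤ L - 1 → zh ℓ = fun j => z ℓ (ι ℓ j) := by
    intro ℓ hℓ
    induction ℓ, hℓ using Nat.le_induction with
    | base =>
      intro h1
      rw [hzh1, hz 1 le_rfl h1, vrelu_affine_comp, ← hz0]
    | succ n hn ih =>
      intro hn'
      -- `hzh` and `hz` index the previous layer by `n + 1 - 1`, which the dependent types
      -- prevent us from rewriting to `n`
      have ih' : zh (n + 1 - 1) = fun j => z (n + 1 - 1) (ι (n + 1 - 1) j) := ih (by omega)
      obtain ⟨q, hq⟩ := hsub (n + 1 - 1) (by omega) (by omega)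
      rw [hzh (n + 1) (by omega) hn', hz (n + 1) (by omega) hn', ih', hq,
        mul_mul_inv_submatrix_mulVec _ _ _ (hinv (n + 1 - 1) (by omega) (by omega)),
        vrelu_affine_comp]
  refine ⟨hidden, ?_⟩
  have hL1 : 1 ≤ L - 1 := by omega
  obtain ⟨q, hq⟩ := hsub (L - 1) hL1 le_rfl
  rw [hyh, hzL, hidden (L - 1) hL1 le_rfl, hq,
    mul_mul_inv_submatrix_mulVec _ _ _ (hinv (L - 1) hL1 le_rfl)]

/-- Exactness of the FastLRNR compression: consider a LRNR of depth `L ≥ 2` with hidden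
states `z⁰ = x`, `z^ℓ = σ(U^ℓ diag(s₁^ℓ) (V^ℓ)ᵀ z^{ℓ−1} + B^ℓ s₂^ℓ)` for `1 ≤ ℓ ≤ L−1`
and output `z^L = U^L diag(s₁^L) (V^L)ᵀ z^{L−1} + b^L`.  Given, for each hidden layer,
a basis matrix `Ξ^ℓ` and a coordinate-selection map `Pᵀ` (an injection `ι ℓ`) with
`(P^ℓ)ᵀ Ξ^ℓ` invertible, form the FastLRNR states `ẑ^ℓ` with compressed matrices
`(V̂^ℓ)ᵀ = (V^ℓ)ᵀ Ξ^{ℓ−1} ((P^{ℓ−1})ᵀ Ξ^{ℓ−1})⁻¹`, `Û^ℓ = (P^ℓ)ᵀU^ℓ`, `B̂^ℓ = (P^ℓ)ᵀB^ℓ`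
and output `ŷ`.  If each hidden state lies in the column space of the corresponding `Ξ^ℓ`,
then `ẑ^ℓ = (P^ℓ)ᵀ z^ℓ` for `1 ≤ ℓ ≤ L−1` and `ŷ = z^L`. -/
theorem fastlrnr_exact
    (L : ℕ) (hL : 2 ≤ L)
    (Mw r₁ r₂ rh : ℕ → ℕ)
    (U : (ℓ : ℕ) → Matrix (Fin (Mw ℓ)) (Fin (r₁ ℓ)) ℝ)
    (V : (ℓ : ℕ) → Matrix (Fin (Mw (ℓ - 1))) (Fin (r₁ ℓ)) ℝ)
    (B : (ℓ : ℕ) → Matrix (Fin (Mw ℓ)) (Fin (r₂ ℓ)) ℝ)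
    (s₁ : (ℓ : ℕ) → Fin (r₁ ℓ) → ℝ) (s₂ : (ℓ : ℕ) → Fin (r₂ ℓ) → ℝ)
    (bL : Fin (Mw L) → ℝ)
    (x : Fin (Mw 0) → ℝ)
    -- the LRNR hidden states and output
    (z : (ℓ : ℕ) → Fin (Mw ℓ) → ℝ)
    (hz0 : z 0 = x)
    (hz : ∀ ℓ, 1 ≤ ℓ → ℓ ≤ L - 1 →
      z ℓ = vrelu ((U ℓ).mulVec (fun k => s₁ ℓ k * ((V ℓ)ᵀ.mulVec (z (ℓ - 1))) k) +
        (B ℓ).mulVec (s₂ ℓ)))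
    (hzL : z L = (U L).mulVec (fun k => s₁ L k * ((V L)ᵀ.mulVec (z (L - 1))) k) + bL)
    -- the empirical interpolation data
    (Ξ : (ℓ : ℕ) → Matrix (Fin (Mw ℓ)) (Fin (rh ℓ)) ℝ)
    (ι : (ℓ : ℕ) → Fin (rh ℓ) → Fin (Mw ℓ))
    (hι : ∀ ℓ, 1 ≤ ℓ → ℓ ≤ L - 1 → Function.Injective (ι ℓ))
    (hinv : ∀ ℓ, 1 ≤ ℓ → ℓ ≤ L - 1 → IsUnit ((Ξ ℓ).submatrix (ι ℓ) id).det)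
    -- the FastLRNR states and output
    (zh : (ℓ : ℕ) → Fin (rh ℓ) → ℝ)
    (hzh1 : zh 1 = vrelu (((U 1).submatrix (ι 1) id).mulVec
        (fun k => s₁ 1 k * ((V 1)ᵀ.mulVec x) k) +
      ((B 1).submatrix (ι 1) id).mulVec (s₂ 1)))
    (hzh : ∀ ℓ, 2 ≤ ℓ → ℓ ≤ L - 1 →
      zh ℓ = vrelu (((U ℓ).submatrix (ι ℓ) id).mulVec
          (fun k => s₁ ℓ k *
            (((V ℓ)ᵀ * Ξ (ℓ - 1) * ((Ξ (ℓ - 1)).submatrix (ι (ℓ - 1)) id)⁻¹).mulVec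
              (zh (ℓ - 1))) k) +
        ((B ℓ).submatrix (ι ℓ) id).mulVec (s₂ ℓ)))
    (yh : Fin (Mw L) → ℝ)
    (hyh : yh = (U L).mulVec
        (fun k => s₁ L k *
          (((V L)ᵀ * Ξ (L - 1) * ((Ξ (L - 1)).submatrix (ι (L - 1)) id)⁻¹).mulVec
            (zh (L - 1))) k) + bL)
    -- the hidden states lie in the sampled subspaces
    (hsub : ∀ ℓ, 1 ≤ ℓ → ℓ ≤ L - 1 → ∃ q : Fin (rh ℓ) → ℝ, z ℓ = (Ξ ℓ).mulVec q) :
    (∀ ℓ, 1 ≤ ℓ → ℓ ≤ L - 1 → zh ℓ = fun j => z ℓ (ι ℓ j)) ∧ yh = z L :=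
  fastlrnr_exact_general L hL Mw r₁ r₂ rh U V B s₁ s₂ bL x z hz0 hz hzL Ξ ι hinv zh hzh1 hzh yh hyh
    hsub
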